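/- There exists a constant C > 0, depending only on h and μ, such that for every l ∈ B, every v ∈ L², and every continuous function Φ : [0,1] → L² satisfying the Marcus integral equation Φ(t) = v + l ∫₀ᵗ ḡ(Φ(s)) ds for all t ∈ [0,1], the map H(l,v) := Φ(1) − v − l ḡ(v) satisfies ‖H(l,v)‖_{L²} ≤ C (1 + ‖v‖_{L²}). -/

import Mathlib

/-!
The drift `ḡ v = v × h + h` is Lipschitz on `L²` with constant `‖h‖_∞`, since the cross product
satisfies `|a × b| ≤ |a| |b|`. A solution of `Φ t = v + l ∫₀ᵗ ḡ (Φ s) ds` with `|l| ≤ 1` has right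
derivative `l ḡ (Φ t)` of norm at most `‖h‖_∞ ‖Φ t‖ + ‖ḡ 0‖`, so Grönwall bounds `‖Φ‖` on `[0, 1]`
by an affine function of `‖v‖`; hence so are `‖Φ 1 - v‖ ≤ sup ‖ḡ ∘ Φ‖` and `‖l ḡ v‖`.
-/

open MeasureTheory
open scoped RealInnerProductSpace ENNReal

/-- The cross product on `ℝ³ = EuclideanSpace ℝ (Fin 3)`. -/
noncomputable def cross3 (a b : EuclideanSpace ℝ (Fin 3)) : EuclideanSpace ℝ (Fin 3) :=
  WithLp.toLp 2 ![a 1 * b 2 - a 2 * b 1, a 2 * b 0 - a 0 * b 2, a 0 * b 1 - a 1 * b 0]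

open Set Real
open scoped NNReal

lemma norm_cross3_le (a b : EuclideanSpace ℝ (Fin 3)) : ‖cross3 a b‖ ≤ ‖a‖ * ‖b‖ := by
  have norm_sq : ∀ x : EuclideanSpace ℝ (Fin 3), ‖x‖ ^ 2 = x 0 ^ 2 + x 1 ^ 2 + x 2 ^ 2 := by
    intro x
    rw [EuclideanSpace.norm_sq_eq, Fin.sum_univ_three]
    simp only [Real.norm_eq_abs, sq_abs]
  rw [← sq_le_sq₀ (norm_nonneg _) (by positivity), mul_pow, norm_sq, norm_sq, norm_sq]
  simp only [cross3, PiLp.toLp_apply, Matrix.cons_val_zero, Matrix.cons_val_one,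
    Matrix.cons_val_two, Matrix.head_cons, Matrix.tail_cons]
  -- Lagrange's identity: `|a × b|² = |a|² |b|² - (a ⬝ b)²`.
  nlinarith [sq_nonneg (a 0 * b 0 + a 1 * b 1 + a 2 * b 2)]

lemma cross3_sub_left (a b c : EuclideanSpace ℝ (Fin 3)) :
    cross3 (a - b) c = cross3 a c - cross3 b c := by
  ext i
  fin_cases i <;> simp [cross3] <;> ring

lemma gronwallBound_le_mul_exp {δ K ε x : ℝ} (hK : 0 ≤ K) (hε : 0 ≤ ε) :
    gronwallBound δ K ε x ≤ (δ + ε * x) * exp (K * x) := by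
  rcases hK.eq_or_lt with rfl | hK
  · simp [gronwallBound_K0]
  have exp_sub_one_le : exp (K * x) - 1 ≤ K * x * exp (K * x) := by
    have h1 : exp (-(K * x)) * exp (K * x) = 1 := by rw [← exp_add, neg_add_cancel, exp_zero]
    nlinarith [one_sub_le_exp_neg (K * x), exp_pos (K * x)]
  calc gronwallBound δ K ε x = δ * exp (K * x) + ε / K * (exp (K * x) - 1) := by
        rw [gronwallBound_of_K_ne_0 hK.ne']
    _ ≤ δ * exp (K * x) + ε / K * (K * x * exp (K * x)) := by gcongr
    _ = (δ + ε * x) * exp (K * x) := by field_simp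

lemma LipschitzWith.norm_le_mul_add_norm_zero {E F : Type*} [SeminormedAddCommGroup E]
    [SeminormedAddCommGroup F] {g : E → F} {K : ℝ≥0} (hg : LipschitzWith K g) (v : E) :
    ‖g v‖ ≤ K * ‖v‖ + ‖g 0‖ := by
  calc ‖g v‖ ≤ ‖g v - g 0‖ + ‖g 0‖ := norm_le_norm_sub_add _ _
    _ ≤ K * ‖v‖ + ‖g 0‖ := by
      gcongr
      simpa [dist_eq_norm] using hg.dist_le_mul v 0

section IntegralEquation

variable {E : Type*} [NormedAddCommGroup E] [NormedSpace ℝ E] [CompleteSpace E]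
  {l : ℝ} {v : E} {Φ : ℝ → E}

lemma hasDerivWithinAt_of_eq_add_smul_integral {a b t : ℝ} {G : ℝ → E}
    (hG : ContinuousOn G (Icc a b)) (hΦ : ∀ t ∈ Icc a b, Φ t = v + l • ∫ s in a..t, G s)
    (ht : t ∈ Ico a b) : HasDerivWithinAt Φ (l • G t) (Ici t) t := by
  have hIcc : Icc t b ∈ nhdsWithin t (Ioi t) := Icc_mem_nhdsGT_of_mem ⟨le_rfl, ht.2⟩
  have hGt : ContinuousOn G (Icc t b) := hG.mono (Icc_subset_Icc ht.1 le_rfl)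
  have hint : HasDerivWithinAt (fun u => ∫ s in a..u, G s) (G t) (Ici t) t := by
    refine intervalIntegral.integral_hasDerivWithinAt_right ?_ ?_ ?_
    · refine (hG.mono ?_).intervalIntegrable_of_Icc ht.1
      exact Icc_subset_Icc le_rfl ht.2.le
    · exact ⟨Icc t b, hIcc, hGt.aestronglyMeasurable measurableSet_Icc⟩
    · exact (hGt t ⟨le_rfl, ht.2.le⟩).mono_of_mem_nhdsWithin hIcc
  refine ((hint.const_smul l).const_add v).congr_of_eventuallyEq ?_
    (hΦ t (Ico_subset_Icc_self ht))
  filter_upwards [Icc_mem_nhdsGE_of_mem ht] with u hu using hΦ u hu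

variable {g : E → E} {K : ℝ≥0}

lemma norm_le_of_eq_add_smul_integral (hg : LipschitzWith K g) (hl : |l| ≤ 1) {T : ℝ}
    (hT : 0 ≤ T) (hΦc : ContinuousOn Φ (Icc 0 T))
    (hΦ : ∀ t ∈ Icc 0 T, Φ t = v + l • ∫ s in 0..t, g (Φ s)) :
    ∀ t ∈ Icc 0 T, ‖Φ t‖ ≤ (‖v‖ + ‖g 0‖ * T) * exp (K * T) := by
  have hderiv := fun t (ht : t ∈ Ico 0 T) =>
    hasDerivWithinAt_of_eq_add_smul_integral (hg.continuous.comp_continuousOn hΦc) hΦ ht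
  have hΦ0 : Φ 0 = v := by simpa using hΦ 0 (left_mem_Icc.2 hT)
  have hbound : ∀ t ∈ Ico 0 T, ‖l • g (Φ t)‖ ≤ K * ‖Φ t‖ + ‖g 0‖ := fun t _ =>
    calc ‖l • g (Φ t)‖ = |l| * ‖g (Φ t)‖ := by rw [norm_smul, Real.norm_eq_abs]
      _ ≤ ‖g (Φ t)‖ := mul_le_of_le_one_left (norm_nonneg _) hl
      _ ≤ K * ‖Φ t‖ + ‖g 0‖ := hg.norm_le_mul_add_norm_zero _
  intro t ht
  calc ‖Φ t‖ ≤ gronwallBound ‖v‖ K ‖g 0‖ (t - 0) :=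
        norm_le_gronwallBound_of_norm_deriv_right_le hΦc hderiv (by rw [hΦ0]) hbound t ht
    _ ≤ gronwallBound ‖v‖ K ‖g 0‖ T :=
        gronwallBound_mono (norm_nonneg _) (norm_nonneg _) K.2 (by linarith [ht.2])
    _ ≤ (‖v‖ + ‖g 0‖ * T) * exp (K * T) :=
        gronwallBound_le_mul_exp K.2 (norm_nonneg _)

lemma norm_sub_sub_smul_le_of_eq_add_smul_integral (hg : LipschitzWith K g) (hl : |l| ≤ 1)
    (hΦc : ContinuousOn Φ (Icc 0 1)) (hΦ : ∀ t ∈ Icc 0 1, Φ t = v + l • ∫ s in 0..t, g (Φ s)) :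
    ‖Φ 1 - v - l • g v‖ ≤ 2 * (K + 1) * exp K * (‖v‖ + ‖g 0‖) := by
  set B := (‖v‖ + ‖g 0‖) * exp K
  have hB := norm_le_of_eq_add_smul_integral hg hl zero_le_one hΦc hΦ
  simp only [mul_one] at hB
  have hsmul_le : ∀ w : E, ‖l • w‖ ≤ ‖w‖ := fun w => by
    rw [norm_smul, Real.norm_eq_abs]; exact mul_le_of_le_one_left (norm_nonneg _) hl
  have hint : ‖∫ s in (0:ℝ)..1, g (Φ s)‖ ≤ K * B + ‖g 0‖ := by
    have hle : ∀ s ∈ uIoc (0:ℝ) 1, ‖g (Φ s)‖ ≤ K * B + ‖g 0‖ := fun s hs => by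
      rw [uIoc_of_le zero_le_one] at hs
      grw [hg.norm_le_mul_add_norm_zero, hB s (Ioc_subset_Icc_self hs)]
    simpa using intervalIntegral.norm_integral_le_of_norm_le_const hle
  have hend : Φ 1 - v = l • ∫ s in (0:ℝ)..1, g (Φ s) := by
    rw [hΦ 1 (right_mem_Icc.2 zero_le_one), add_sub_cancel_left]
  calc ‖Φ 1 - v - l • g v‖ ≤ ‖Φ 1 - v‖ + ‖l • g v‖ := norm_sub_le _ _
    _ ≤ (K * B + ‖g 0‖) + (K * ‖v‖ + ‖g 0‖) := by
        rw [hend]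
        gcongr
        · exact (hsmul_le _).trans hint
        · exact (hsmul_le _).trans (hg.norm_le_mul_add_norm_zero v)
    _ ≤ 2 * (K + 1) * exp K * (‖v‖ + ‖g 0‖) := by
        have hS : ‖v‖ + ‖g 0‖ ≤ B := le_mul_of_one_le_right (by positivity) (one_le_exp K.2)
        nlinarith [mul_le_mul_of_nonneg_left hS K.2, norm_nonneg v, norm_nonneg (g 0)]

end IntegralEquation

lemma lipschitzWith_of_ae_eq_cross3_add {𝒪 : Type*} [MeasurableSpace 𝒪] {μ : Measure 𝒪}
    {p : ℝ≥0∞} [Fact (1 ≤ p)] {h : 𝒪 → EuclideanSpace ℝ (Fin 3)} {M : ℝ}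
    (hM : ∀ᵐ x ∂μ, ‖h x‖ ≤ M)
    {gbar : Lp (EuclideanSpace ℝ (Fin 3)) p μ → Lp (EuclideanSpace ℝ (Fin 3)) p μ}
    (hgbar : ∀ v, ∀ᵐ x ∂μ, gbar v x = cross3 (v x) (h x) + h x) :
    LipschitzWith M.toNNReal gbar := by
  refine LipschitzWith.of_dist_le' fun v w => ?_
  rw [dist_eq_norm, dist_eq_norm]
  refine Lp.norm_le_mul_norm_of_ae_le_mul ?_
  filter_upwards [hgbar v, hgbar w, Lp.coeFn_sub (gbar v) (gbar w), Lp.coeFn_sub v w, hM]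
    with x hv hw hgsub hsub hMx
  rw [hgsub, Pi.sub_apply, hv, hw, add_sub_add_right_eq_sub, ← cross3_sub_left, hsub,
    Pi.sub_apply]
  calc _ ≤ ‖v x - w x‖ * ‖h x‖ := norm_cross3_le _ _
    _ ≤ M * ‖v x - w x‖ := by rw [mul_comm]; gcongr

theorem marcus_H_linear_growth_general
    {𝒪 : Type*} [MeasurableSpace 𝒪] (μ : Measure 𝒪)
    (h : 𝒪 → EuclideanSpace ℝ (Fin 3)) (hbdd : MemLp h ⊤ μ)
    (gbar : Lp (EuclideanSpace ℝ (Fin 3)) 2 μ → Lp (EuclideanSpace ℝ (Fin 3)) 2 μ)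
    (hgbar : ∀ v, ∀ᵐ x ∂μ, gbar v x = cross3 (v x) (h x) + h x) :
    ∃ C : ℝ, 0 < C ∧
      ∀ (l : ℝ), 0 < |l| → |l| < 1 →
      ∀ (v : Lp (EuclideanSpace ℝ (Fin 3)) 2 μ)
        (Φ : ℝ → Lp (EuclideanSpace ℝ (Fin 3)) 2 μ),
        ContinuousOn Φ (Set.Icc 0 1) →
        (∀ t ∈ Set.Icc (0:ℝ) 1, Φ t = v + l • ∫ s in (0:ℝ)..t, gbar (Φ s)) →
        ‖Φ 1 - v - l • gbar v‖ ≤ C * (1 + ‖v‖) := by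
  set K := (lpNorm h ∞ μ).toNNReal
  have hg : LipschitzWith K gbar :=
    lipschitzWith_of_ae_eq_cross3_add (ae_le_lpNorm_exponent_top hbdd) hgbar
  refine ⟨2 * (K + 1) * exp K * (1 + ‖gbar 0‖), by positivity, ?_⟩
  intro l _ hl v Φ hΦc hΦ
  calc ‖Φ 1 - v - l • gbar v‖ ≤ 2 * (K + 1) * exp K * (‖v‖ + ‖gbar 0‖) :=
        norm_sub_sub_smul_le_of_eq_add_smul_integral hg hl.le hΦc hΦ
    _ ≤ 2 * (K + 1) * exp K * (1 + ‖gbar 0‖) * (1 + ‖v‖) := by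
        rw [mul_assoc _ (1 + _)]
        gcongr
        nlinarith [norm_nonneg v, norm_nonneg (gbar 0)]

/-- linear growth of the Marcus correction `H(l,v) = Φ(1) − v − l ḡ(v)`,
uniformly in `l ∈ B`. -/
theorem marcus_H_linear_growth
    {𝒪 : Type*} [MeasurableSpace 𝒪] (μ : Measure 𝒪) [IsFiniteMeasure μ]
    (h : 𝒪 → EuclideanSpace ℝ (Fin 3)) (hmeas : Measurable h) (hbdd : MemLp h ⊤ μ)
    (gbar : Lp (EuclideanSpace ℝ (Fin 3)) 2 μ → Lp (EuclideanSpace ℝ (Fin 3)) 2 μ)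
    (hgbar : ∀ v, ∀ᵐ x ∂μ, gbar v x = cross3 (v x) (h x) + h x) :
    ∃ C : ℝ, 0 < C ∧
      ∀ (l : ℝ), 0 < |l| → |l| < 1 →
      ∀ (v : Lp (EuclideanSpace ℝ (Fin 3)) 2 μ)
        (Φ : ℝ → Lp (EuclideanSpace ℝ (Fin 3)) 2 μ),
        ContinuousOn Φ (Set.Icc 0 1) →
        (∀ t ∈ Set.Icc (0:ℝ) 1, Φ t = v + l • ∫ s in (0:ℝ)..t, gbar (Φ s)) →
        ‖Φ 1 - v - l • gbar v‖ ≤ C * (1 + ‖v‖) :=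
  marcus_H_linear_growth_general μ h hbdd gbar hgbar
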